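/- Let ζ ∈ ℕ^r be weakly increasing and μ ∈ ℕ^{r−1} weakly increasing such that ζ/μ is a ribbon (μ padded with an initial 0 part). Then Σ_η ψ^v(ζ/η) · ψ^h(η/μ) = θ(ζ/μ), the sum running over all weakly increasing η ∈ ℕ^r such that ζ/η is a vertical strip and η/μ is a horizontal strip, where in ψ^h the variable x stands for x_r. -/

import Mathlib

open scoped BigOperators

/-! ### Polynomial ring in two families of variables `x₁, x₂, …` and `y₁, y₂, …`.

`Rpoly` is the ring of polynomials with integer coefficients in the variables
`xP i` (the `x`-variables, indexed by `Sum.inl`) and `yP j` (the `y`-variables,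
indexed by `Sum.inr`).  Throughout, variables are indexed starting from `1`. -/

abbrev Rpoly : Type := MvPolynomial (ℕ ⊕ ℕ) ℤ

noncomputable def xP (i : ℕ) : Rpoly := MvPolynomial.X (Sum.inl i)
noncomputable def yP (i : ℕ) : Rpoly := MvPolynomial.X (Sum.inr i)

/-! ### Divided differences on `Rpoly`.

`ddP i` is the Newton divided difference `∂ᵢ : f ↦ (f - fˢⁱ)/(xᵢ - xᵢ₊₁)`,
implemented by its (exact) action on monomials:
`∂ᵢ (xᵢ^a xᵢ₊₁^b) = Σ_{j=b}^{a-1} xᵢ^j xᵢ₊₁^{a+b-1-j}` for `a ≥ b`,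
and the antisymmetric counterpart when `a < b`. -/

noncomputable def ddMon (i : ℕ) (m : (ℕ ⊕ ℕ) →₀ ℕ) : Rpoly :=
  let a := m (Sum.inl i)
  let b := m (Sum.inl (i + 1))
  if b ≤ a then
    ∑ j ∈ Finset.Ico b a,
      MvPolynomial.monomial
        (Finsupp.update (Finsupp.update m (Sum.inl i) j) (Sum.inl (i + 1)) (a + b - 1 - j)) 1
  else
    - ∑ j ∈ Finset.Ico a b,
      MvPolynomial.monomial
        (Finsupp.update (Finsupp.update m (Sum.inl i) j) (Sum.inl (i + 1)) (a + b - 1 - j)) 1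

noncomputable def ddP (i : ℕ) (f : Rpoly) : Rpoly :=
  ∑ m ∈ f.support, MvPolynomial.coeff m f • ddMon i m

/-- `∂_σ` along a word `[i₁, …, i_N]` is `∂_{i₁} ∘ ⋯ ∘ ∂_{i_N}`. -/
noncomputable def ddWord (w : List ℕ) (f : Rpoly) : Rpoly := w.foldr ddP f

/-! ### Schubert polynomials, indexed by a permutation given as a list
`[σ 1, …, σ n]` of the values of a permutation of `{1, …, n}`. -/

/-- The code of a permutation list: `c i = #{j > i : σ_j < σ_i}` (positions 0-based). -/
def codeOf (l : List ℕ) (i : ℕ) : ℕ :=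
  ((l.drop (i + 1)).filter (fun a => a < l.getD i 0)).length

/-- The dominant Schubert polynomial `Y_v = Π_i Π_{j=1}^{v_i} (x_i - y_j)`
attached to an exponent list `v`. -/
noncomputable def YDomP (v : List ℕ) : Rpoly :=
  ∏ i ∈ Finset.range v.length, ∏ j ∈ Finset.range (v.getD i 0), (xP (i + 1) - yP (j + 1))

/-- The dominant polynomial attached to a (dominant) permutation list via its code. -/
noncomputable def domP (l : List ℕ) : Rpoly :=
  YDomP ((List.range l.length).map (codeOf l))

/-- First ascent position (0-based) of a list. -/
def firstAscent (l : List ℕ) : Option ℕ :=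
  (List.range (l.length - 1)).find? (fun i => l.getD i 0 < l.getD (i + 1) 0)

/-- First descent position (0-based) of a list. -/
def firstDescent (l : List ℕ) : Option ℕ :=
  (List.range (l.length - 1)).find? (fun i => l.getD (i + 1) 0 < l.getD i 0)

/-- Exchange the entries at positions `i`, `i+1` of a list. -/
def swapPos (l : List ℕ) (i : ℕ) : List ℕ :=
  (l.set i (l.getD (i + 1) 0)).set (i + 1) (l.getD i 0)

/-- Schubert polynomials via the recursion `X_σ = ∂_i X_{σ sᵢ}` whenever
`σ_i < σ_{i+1}` (so that lengths add), starting from the dominant case; the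
first argument is a fuel parameter. -/
noncomputable def SchubAux : ℕ → List ℕ → Rpoly
  | 0, l => domP l
  | fuel + 1, l =>
    match firstAscent l with
    | none => domP l
    | some i => ddP (i + 1) (SchubAux fuel (swapPos l i))

/-- The Schubert polynomial `X_σ(x, y)` of a permutation list `σ = [σ 1, …, σ n]`. -/
noncomputable def SchubP (l : List ℕ) : Rpoly := SchubAux (l.length * l.length) l

/-- A reduced word for the permutation given by a list, obtained by repeatedly
exchanging the first descent: if `i` is a descent of `σ` then
`word σ = word (σ sᵢ) ++ [i]`. -/
def sortWord : ℕ → List ℕ → List ℕ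
  | 0, _ => []
  | fuel + 1, l =>
    match firstDescent l with
    | none => []
    | some i => sortWord fuel (swapPos l i) ++ [i + 1]

/-- The standard reduced word `s₁ (s₂ s₁) (s₃ s₂ s₁) ⋯ (s_{r-1} ⋯ s₁)` of the
longest element `ω_r` of the symmetric group `S_r`. -/
def omegaWord (r : ℕ) : List ℕ :=
  (List.range (r - 1)).flatMap (fun k => (List.range (k + 1)).map (fun j => k + 1 - j))

/-- For weakly increasing `ν ∈ ℕ^r`, the partition `λ = (ν_r + r - 1, …, ν_1)`. -/
def lamOf (ν : List ℕ) : List ℕ :=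
  ν.reverse.mapIdx (fun i a => a + (ν.length - 1 - i))

/-- For a weakly increasing `ν ∈ ℕ^r`, the (Graßmannian) Schubert polynomial
`Y_ν := ∂_{ω_r} Y_λ` with `λ = (ν_r + r - 1, …, ν_1)`. -/
noncomputable def YGr (ν : List ℕ) : Rpoly := ddWord (omegaWord ν.length) (YDomP (lamOf ν))

/-- Evaluation of a polynomial of `Rpoly` at points `x i`, `y j` of a commutative ring. -/
noncomputable def evalP {K : Type*} [CommRing K] (x y : ℕ → K) (f : Rpoly) : K :=
  MvPolynomial.aeval (Sum.elim x y) f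

/-! ### Columns, staircases and their partition functions. -/

/-- A column: a strictly decreasing list of positive integers. -/
def IsCol (u : List ℕ) : Prop := u.Chain' (· > ·) ∧ ∀ a ∈ u, 0 < a

/-- Rows weakly increase: reading rows from the bottom (columns are bottom-aligned),
the left neighbour of the entry of `next` at 0-based position `p` (from the top)
is the entry of `prev` at position `p+1`. -/
def RowCond (prev next : List ℕ) : Prop :=
  ∀ p, p < next.length → prev.getD (p + 1) 0 ≤ next.getD p 0

/-- Diagonals weakly decrease: the up-left neighbour of the entry of `next` at
0-based position `p` is the entry of `prev` at position `p`. -/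
def DiagCond (prev next : List ℕ) : Prop :=
  ∀ p, p < next.length → next.getD p 0 ≤ prev.getD p 0

/-- A staircase: a nonempty sequence of columns of lengths `k, k-1, …, k-r`,
with weakly increasing rows and weakly decreasing diagonals. -/
def IsStaircase (t : List (List ℕ)) : Prop :=
  t ≠ [] ∧
  (∀ i, i < t.length → (t.getD i []).length + i = (t.getD 0 []).length) ∧
  (∀ c ∈ t, IsCol c) ∧
  (∀ i, i + 1 < t.length →
    RowCond (t.getD i []) (t.getD (i + 1) []) ∧ DiagCond (t.getD i []) (t.getD (i + 1) []))

section Weights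

variable {K : Type*} [Field K]

/-- The weight of an entry `b` whose left neighbour is `left` and whose up-left
neighbour is `upleft`, the column carrying the variable value `xv`:
`xv/y_b - 1` if `left = b`, `xv/y_b` if `left < b < upleft`, and `1` otherwise. -/
noncomputable def entryW (xv : K) (y : ℕ → K) (b left upleft : ℕ) : K :=
  if left = b then xv / y b - 1
  else if left < b ∧ b < upleft then xv / y b
  else 1

/-- The product of the weights of the entries of the column `next`, whose left
neighbour column is `prev` (one entry longer). -/
noncomputable def colW (xv : K) (y : ℕ → K) (prev next : List ℕ) : K :=
  ∏ p ∈ Finset.range next.length,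
    entryW xv y (next.getD p 0) (prev.getD (p + 1) 0) (prev.getD p 0)

/-- The weight of a staircase: the `m`-th column after the first carries the
variable `x m`. -/
noncomputable def stairW (x y : ℕ → K) (t : List (List ℕ)) : K :=
  ∏ m ∈ Finset.range (t.length - 1), colW (x (m + 1)) y (t.getD m []) (t.getD (m + 1) [])

/-- The partition function `F(u, v)`: the sum of the weights of all staircases
with first column `u` and last column `v`. -/
noncomputable def Fpart (u v : List ℕ) (x y : ℕ → K) : K :=
  ∑ᶠ t ∈ {t : List (List ℕ) | IsStaircase t ∧ t.headD [] = u ∧ t.getLastD [] = v},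
    stairW x y t

/-- `x^{ρ_r} = x₁^{r-1} x₂^{r-2} ⋯ x_r^0`. -/
noncomputable def xRho (r : ℕ) (x : ℕ → K) : K :=
  ∏ i ∈ Finset.range r, (x (i + 1)) ^ (r - 1 - i)

/-- `Π_i y_i^{α_i}` for an exponent list `α`. -/
noncomputable def yPowL (y : ℕ → K) (α : List ℕ) : K :=
  ∏ i ∈ Finset.range α.length, (y (i + 1)) ^ (α.getD i 0)

/-- `y^{⟨u⟩} = Π_m y_m^{⟨u⟩_m}` where `⟨u⟩_m` is the level of the value `m`. -/
noncomputable def yLev (u : List ℕ) (y : ℕ → K) : K :=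
  ∏ m ∈ Finset.range (u.foldr max 0), (y (m + 1)) ^ ((u.filter (fun a => m + 1 < a)).length)

end Weights

/-- The column `[n, n-1, …, 1]`. -/
def colN (n : ℕ) : List ℕ := (List.range n).reverse.map (· + 1)

/-- The list `[1, 2, …, n]`. -/
def oneTo (n : ℕ) : List ℕ := (List.range n).map (· + 1)

/-- The increasing complement of `u` in `{1, …, n}`. -/
def compl (n : ℕ) (u : List ℕ) : List ℕ := (oneTo n).filter (fun a => a ∉ u)

/-- The list `ρ_r = [r-1, r-2, …, 1, 0]`. -/
def rhoList (r : ℕ) : List ℕ := (List.range r).map (fun i => r - 1 - i)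

/-- `p(u, n) = [ũ₁ - 1, ũ₂ - 2, …, ũ_k - k]` where `ũ` is the increasing
complement of `u` in `{1, …, n}`. -/
def pSeq (n : ℕ) (u : List ℕ) : List ℕ := (compl n u).mapIdx (fun i a => a - (i + 1))

/-- Action of a permutation `w ∈ S_r` on the variables `x₁, …, x_r` of an assignment. -/
def permuteVars {α : Type*} {r : ℕ} (w : Equiv.Perm (Fin r)) (x : ℕ → α) : ℕ → α :=
  fun j => if h : 1 ≤ j ∧ j - 1 < r then x ((w ⟨j - 1, h.2⟩).val + 1) else x j

/-! ### Skew diagrams.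

The diagram of a weakly increasing `ζ ∈ ℕ^r` has rows `1, …, r` from top to
bottom (0-based `i` below), row `i` consisting of boxes in columns `1, …, ζ_i`;
the (shifted) content of the box in 0-based row `i` and 1-based column `j` is
`c(□) = i + j`. -/

/-- The box in 0-based row `i` and (1-based) column `j` belongs to `ζ/μ`. -/
def InSkew (ζ μ : List ℕ) (i j : ℕ) : Prop :=
  i < ζ.length ∧ μ.getD i 0 < j ∧ j ≤ ζ.getD i 0

/-- `μ ⊆ ζ` componentwise (same number of rows). -/
def IsSkew (ζ μ : List ℕ) : Prop :=
  μ.length = ζ.length ∧ ∀ i, i < ζ.length → μ.getD i 0 ≤ ζ.getD i 0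

/-- `ζ/μ` is a ribbon: it contains no `2 × 2` block of boxes. -/
def IsRibbon (ζ μ : List ℕ) : Prop :=
  IsSkew ζ μ ∧
    ¬ ∃ i j, InSkew ζ μ i j ∧ InSkew ζ μ i (j + 1) ∧
      InSkew ζ μ (i + 1) j ∧ InSkew ζ μ (i + 1) (j + 1)

/-- `ζ/μ` is a vertical strip: at most one box in each row. -/
def IsVStrip (ζ μ : List ℕ) : Prop :=
  IsSkew ζ μ ∧ ∀ i, i < ζ.length → ζ.getD i 0 ≤ μ.getD i 0 + 1

/-- `ζ/μ` is a horizontal strip: at most one box in each column. -/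
def IsHStrip (ζ μ : List ℕ) : Prop :=
  IsSkew ζ μ ∧ ∀ i j, InSkew ζ μ i j → ¬ InSkew ζ μ (i + 1) j

/-- `ψ^v(ζ/μ) = Π_{□ ∈ ζ/μ} y_{c(□)}`. -/
noncomputable def psiV (ζ μ : List ℕ) : Rpoly :=
  ∏ i ∈ Finset.range ζ.length, ∏ j ∈ Finset.Ioc (μ.getD i 0) (ζ.getD i 0), yP (i + j)

/-- `ψ^h(ζ/μ) = Π_{□ ∈ ζ/μ} (x - y_{c(□)})`. -/
noncomputable def psiH (ζ μ : List ℕ) (xv : Rpoly) : Rpoly :=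
  ∏ i ∈ Finset.range ζ.length, ∏ j ∈ Finset.Ioc (μ.getD i 0) (ζ.getD i 0), (xv - yP (i + j))

/-- The ribbon weight `θ(ζ/μ)`: a non-terminal box contributes `x - y_{c(□)}`;
a terminal box contributes `y_{c(□)}` if it lies directly above another box of
the ribbon, and `x` otherwise. -/
noncomputable def thetaW (ζ μ : List ℕ) (xv : Rpoly) : Rpoly :=
  ∏ i ∈ Finset.range ζ.length, ∏ j ∈ Finset.Ioc (μ.getD i 0) (ζ.getD i 0),
    if j < ζ.getD i 0 then xv - yP (i + j)
    else if i + 1 < ζ.length ∧ μ.getD (i + 1) 0 < j ∧ j ≤ ζ.getD (i + 1) 0 then yP (i + j)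
    else xv

/-! ### Complete functions of differences of alphabets, and multi-Schur functions. -/

/-- `S_m(A - B)`: the coefficient of `t^m` in `Π_{b ∈ B} (1 - t b) · Π_{a ∈ A} (1 - t a)⁻¹`
(zero for `m < 0`). -/
noncomputable def Scomp {K : Type*} [Field K] (m : ℤ) (A B : List K) : K :=
  if 0 ≤ m then
    PowerSeries.coeff m.toNat
      ((B.map (fun b => 1 - PowerSeries.C b * PowerSeries.X)).prod *
        ((A.map (fun a => 1 - PowerSeries.C a * PowerSeries.X)).prod)⁻¹)
  else 0

/-- The multi-Schur function
`S_{w/u'}(z - y₁, …, z - y_N // x₁, …, x_N) = det |S_{w_j - u'_i + j - i}(z + x_i - y_j)|`. -/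
noncomputable def multiSchur {K : Type*} [Field K] (N : ℕ) (w u' : ℕ → ℤ) (z : List K)
    (ys xs : ℕ → List K) : K :=
  Matrix.det (Matrix.of fun i j : Fin N =>
    Scomp (w j - u' i + ((j : ℕ) : ℤ) - ((i : ℕ) : ℤ)) (z ++ xs i) (ys j))

/-! ### `S_∞`: permutations of the positive integers with finite support. -/

/-- Permutations of the positive integers (modelled as permutations of `ℕ`
fixing `0`) fixing all but finitely many integers. -/
def SInfSet : Set (Equiv.Perm ℕ) := {σ | σ 0 = 0 ∧ {i | σ i ≠ i}.Finite}

/-- The least `n` such that `σ` fixes every `i ≥ n`. -/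
noncomputable def bnd (σ : Equiv.Perm ℕ) : ℕ := sInf {n | ∀ i, n ≤ i → σ i = i}

/-- The list `[σ 1, …, σ m]` of values of `σ` on the segment it permutes. -/
noncomputable def permList (σ : Equiv.Perm ℕ) : List ℕ :=
  (List.range (bnd σ - 1)).map (fun i => σ (i + 1))

/-- The divided difference `∂_σ` for `σ ∈ S_∞`, computed along a reduced word of `σ`. -/
noncomputable def ddPerm (σ : Equiv.Perm ℕ) (f : Rpoly) : Rpoly :=
  ddWord (sortWord (bnd σ * bnd σ) (permList σ)) f

/-- The specialization `x_i ↦ y_i` (for every `i`). -/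
noncomputable def specXY (f : Rpoly) : Rpoly :=
  MvPolynomial.aeval (Sum.elim (fun i => yP i) (fun i => yP i)) f


/-! Because `ζ/ν` (with `ν = 0 :: μ`) is a ribbon, `ζ_i ≤ ν_{i+1} + 1`, so the admissible `η`
are exactly the diagrams obtained from `ζ` by removing the last box of some rows of the ribbon.
Removing it is forced when that box lies above a box of the ribbon (otherwise `η/ν` would have
two boxes in a column) and free in every other row of the ribbon. A removed box contributes
`y_c` to `ψ^v` and a kept one `x - y_c` to `ψ^h`, so each free row contributes
`y_c + (x - y_c) = x` to the sum, while every other box contributes as in `θ`. -/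

open Finset

theorem List.pairwise_le_iff_getD_le_getD_succ {l : List ℕ} :
    l.Pairwise (· ≤ ·) ↔ ∀ i, i + 1 < l.length → l.getD i 0 ≤ l.getD (i + 1) 0 := by
  rw [← List.isChain_iff_pairwise, List.isChain_iff_getElem]
  refine forall_congr' fun i => forall_congr' fun hi => ?_
  rw [List.getD_eq_getElem _ _ (by omega), List.getD_eq_getElem _ _ hi]

theorem Finset.prod_Ioc_eq_prod_Ioo_mul {M : Type*} [CommMonoid M] (f : ℕ → M) {a b : ℕ}
    (h : a < b) : ∏ j ∈ Ioc a b, f j = (∏ j ∈ Ioo a b, f j) * f b := by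
  rw [← Ioo_insert_right h, prod_insert right_notMem_Ioo, mul_comm]

theorem Finset.sum_powerset_prod_union_mul_prod_sdiff {ι R : Type*} [DecidableEq ι] [CommRing R]
    {B N : Finset ι} (h : Disjoint B N) (f : ι → R) (x : R) :
    ∑ T ∈ N.powerset, (∏ i ∈ B ∪ T, f i) * ∏ i ∈ N \ T, (x - f i) =
      (∏ i ∈ B, f i) * x ^ N.card := by
  calc ∑ T ∈ N.powerset, (∏ i ∈ B ∪ T, f i) * ∏ i ∈ N \ T, (x - f i)
      = ∑ T ∈ N.powerset, (∏ i ∈ B, f i) * ((∏ i ∈ T, f i) * ∏ i ∈ N \ T, (x - f i)) :=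
        sum_congr rfl fun T hT => by
          rw [prod_union (h.mono_right (mem_powerset.mp hT)), mul_assoc]
    _ = (∏ i ∈ B, f i) * ∏ i ∈ N, (f i + (x - f i)) := by rw [← mul_sum, prod_add]
    _ = (∏ i ∈ B, f i) * x ^ N.card := by simp_rw [add_sub_cancel, prod_const]

section RibbonRows

variable {r : ℕ} {ζ ν η : List ℕ}

theorem IsRibbon.getD_le_getD_succ_add_one (hrib : IsRibbon ζ ν) (hζ : ζ.Pairwise (· ≤ ·))
    (hν : ν.Pairwise (· ≤ ·)) {i : ℕ} (hi : i + 1 < ζ.length) :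
    ζ.getD i 0 ≤ ν.getD (i + 1) 0 + 1 := by
  have hζi := List.pairwise_le_iff_getD_le_getD_succ.mp hζ i hi
  have hνi := List.pairwise_le_iff_getD_le_getD_succ.mp hν i (by rw [hrib.1.1]; exact hi)
  have hsub := hrib.1.2 i (by omega)
  by_contra! h
  exact hrib.2 ⟨i, ν.getD (i + 1) 0 + 1, ⟨by omega, by omega, by omega⟩,
    ⟨by omega, by omega, by omega⟩, ⟨hi, by omega, by omega⟩, ⟨hi, by omega, by omega⟩⟩

def lowerRows (r : ℕ) (ζ : List ℕ) (S : Finset ℕ) : List ℕ :=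
  (List.range r).map fun i => if i ∈ S then ζ.getD i 0 - 1 else ζ.getD i 0

@[simp]
theorem lowerRows_length (r : ℕ) (ζ : List ℕ) (S : Finset ℕ) :
    (lowerRows r ζ S).length = r := by
  simp [lowerRows]

theorem lowerRows_getD (ζ : List ℕ) (S : Finset ℕ) {i : ℕ} (hi : i < r) :
    (lowerRows r ζ S).getD i 0 = if i ∈ S then ζ.getD i 0 - 1 else ζ.getD i 0 := by
  rw [lowerRows, List.getD_eq_getElem _ _ (by simpa using hi)]
  simp

def ribbonRows (r : ℕ) (ζ ν : List ℕ) : Finset ℕ :=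
  (range r).filter fun i => ν.getD i 0 < ζ.getD i 0

/-- The rows whose terminal box lies directly above a box of the ribbon `ζ/ν`. -/
def stackedRows (r : ℕ) (ζ ν : List ℕ) : Finset ℕ :=
  (ribbonRows r ζ ν).filter fun i => i + 1 < r ∧ ν.getD (i + 1) 0 < ζ.getD i 0

def stripInterpolants (r : ℕ) (ζ ν : List ℕ) : Set (List ℕ) :=
  {η | η.length = r ∧ η.Pairwise (· ≤ ·) ∧ IsVStrip ζ η ∧ IsHStrip η ν}

noncomputable def nonterminalWeight (r : ℕ) (ζ ν : List ℕ) (x : Rpoly) : Rpoly :=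
  ∏ i ∈ range r, ∏ j ∈ Ioo (ν.getD i 0) (ζ.getD i 0), (x - yP (i + j))

theorem mem_ribbonRows {i : ℕ} : i ∈ ribbonRows r ζ ν ↔ i < r ∧ ν.getD i 0 < ζ.getD i 0 := by
  simp [ribbonRows]

theorem mem_stackedRows {i : ℕ} : i ∈ stackedRows r ζ ν ↔
    i ∈ ribbonRows r ζ ν ∧ i + 1 < r ∧ ν.getD (i + 1) 0 < ζ.getD i 0 := by
  simp [stackedRows]

theorem ribbonRows_subset_range : ribbonRows r ζ ν ⊆ range r :=
  filter_subset _ _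

theorem stackedRows_subset_ribbonRows : stackedRows r ζ ν ⊆ ribbonRows r ζ ν :=
  filter_subset _ _

theorem stackedRows_union_subset_ribbonRows {T : Finset ℕ}
    (hT : T ⊆ ribbonRows r ζ ν \ stackedRows r ζ ν) :
    stackedRows r ζ ν ∪ T ⊆ ribbonRows r ζ ν :=
  union_subset stackedRows_subset_ribbonRows (hT.trans sdiff_subset)

theorem filter_lowerRows_getD_lt {S : Finset ℕ} (hS : S ⊆ ribbonRows r ζ ν) :
    (ribbonRows r ζ ν).filter (fun i => (lowerRows r ζ S).getD i 0 < ζ.getD i 0) = S := by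
  ext i
  rw [mem_filter]
  by_cases hiR : i ∈ ribbonRows r ζ ν
  · obtain ⟨hi, hlt⟩ := mem_ribbonRows.mp hiR
    rw [lowerRows_getD ζ S hi]
    split_ifs with hiS <;> simp only [hiR, hiS, true_and, iff_true, iff_false] <;>
      omega
  · exact iff_of_false (fun h => hiR h.1) (fun h => hiR (hS h))

theorem lowerRows_injOn_union_stackedRows :
    Set.InjOn (fun T => lowerRows r ζ (stackedRows r ζ ν ∪ T))
      ↑(ribbonRows r ζ ν \ stackedRows r ζ ν).powerset := by
  intro T₁ hT₁ T₂ hT₂ h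
  simp only [coe_powerset, Set.mem_preimage, Set.mem_powerset_iff, coe_subset] at hT₁ hT₂
  have := congrArg (fun η => (ribbonRows r ζ ν).filter (fun i => η.getD i 0 < ζ.getD i 0)) h
  simp only [filter_lowerRows_getD_lt (stackedRows_union_subset_ribbonRows hT₁),
    filter_lowerRows_getD_lt (stackedRows_union_subset_ribbonRows hT₂)] at this
  rw [← union_sdiff_cancel_left (disjoint_sdiff.mono_right hT₁), this,
    union_sdiff_cancel_left (disjoint_sdiff.mono_right hT₂)]

theorem lowerRows_getD_le_getD_succ (hζl : ζ.length = r) (hζ : ζ.Pairwise (· ≤ ·))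
    (hν : ν.Pairwise (· ≤ ·)) (hsk : IsSkew ζ ν) {S : Finset ℕ}
    (hB : stackedRows r ζ ν ⊆ S) (hS : S ⊆ ribbonRows r ζ ν) {i : ℕ} (hi : i + 1 < r) :
    (lowerRows r ζ S).getD i 0 ≤ (lowerRows r ζ S).getD (i + 1) 0 := by
  have hζi := List.pairwise_le_iff_getD_le_getD_succ.mp hζ i (by omega)
  have hνi := List.pairwise_le_iff_getD_le_getD_succ.mp hν i (by rw [hsk.1]; omega)
  have hsk_i := hsk.2 i (by omega)
  rw [lowerRows_getD ζ S (by omega), lowerRows_getD ζ S hi]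
  split_ifs with hiS hiS' hiS' <;> try omega
  have hlt := (mem_ribbonRows.mp (hS hiS')).2
  by_contra! h
  exact hiS (hB (mem_stackedRows.mpr ⟨mem_ribbonRows.mpr ⟨by omega, by omega⟩, hi, by omega⟩))

theorem lowerRows_getD_le_inner_getD_succ (hζl : ζ.length = r) (hζ : ζ.Pairwise (· ≤ ·))
    (hν : ν.Pairwise (· ≤ ·)) (hrib : IsRibbon ζ ν) {S : Finset ℕ}
    (hB : stackedRows r ζ ν ⊆ S) {i : ℕ} (hi : i + 1 < r) :
    (lowerRows r ζ S).getD i 0 ≤ ν.getD (i + 1) 0 := by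
  have hbound := hrib.getD_le_getD_succ_add_one hζ hν (i := i) (by omega)
  have hνi := List.pairwise_le_iff_getD_le_getD_succ.mp hν i (by rw [hrib.1.1]; omega)
  rw [lowerRows_getD ζ S (by omega)]
  split_ifs with hiS
  · omega
  · by_contra! h
    exact hiS (hB (mem_stackedRows.mpr ⟨mem_ribbonRows.mpr ⟨by omega, by omega⟩, hi, h⟩))

theorem lowerRows_mem_stripInterpolants (hζl : ζ.length = r) (hζ : ζ.Pairwise (· ≤ ·))
    (hν : ν.Pairwise (· ≤ ·)) (hrib : IsRibbon ζ ν) {S : Finset ℕ}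
    (hB : stackedRows r ζ ν ⊆ S) (hS : S ⊆ ribbonRows r ζ ν) :
    lowerRows r ζ S ∈ stripInterpolants r ζ ν := by
  have hlt : ∀ i ∈ S, ν.getD i 0 < ζ.getD i 0 := fun i hi => (mem_ribbonRows.mp (hS hi)).2
  refine ⟨lowerRows_length r ζ S, ?_, ⟨⟨by simp [hζl], fun i hi => ?_⟩, fun i hi => ?_⟩,
    ⟨⟨by simp [hrib.1.1, hζl], fun i hi => ?_⟩, fun i j hij hij' => ?_⟩⟩
  · refine List.pairwise_le_iff_getD_le_getD_succ.mpr fun i hi => ?_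
    exact lowerRows_getD_le_getD_succ hζl hζ hν hrib.1 hB hS (by simpa using hi)
  · rw [lowerRows_getD ζ S (by omega)]
    split_ifs <;> omega
  · rw [lowerRows_getD ζ S (by omega)]
    split_ifs <;> omega
  · have := hrib.1.2 i (by simpa [hζl] using hi)
    rw [lowerRows_getD ζ S (by simpa using hi)]
    split_ifs with hiS
    · have := hlt i hiS; omega
    · omega
  · have := lowerRows_getD_le_inner_getD_succ hζl hζ hν hrib hB (by simpa using hij'.1)
    have := hij'.2.1
    exact absurd hij.2.2 (by omega)

theorem eq_lowerRows_of_mem_stripInterpolants (hζl : ζ.length = r)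
    (hη : η ∈ stripInterpolants r ζ ν) :
    η = lowerRows r ζ ((ribbonRows r ζ ν).filter fun i => η.getD i 0 < ζ.getD i 0) := by
  obtain ⟨hηl, -, ⟨⟨-, hηζ⟩, hζη⟩, ⟨⟨-, hνη⟩, -⟩⟩ := hη
  refine List.ext_getElem (by simp [hηl]) fun i hi _ => ?_
  have h₁ := hηζ i (by omega)
  have h₂ := hζη i (by omega)
  have h₃ := hνη i hi
  rw [← List.getD_eq_getElem _ 0 hi, ← List.getD_eq_getElem _ 0 (by simpa [hηl] using hi),
    lowerRows_getD ζ _ (by omega)]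
  simp only [mem_filter, mem_ribbonRows]
  split_ifs <;> omega

theorem stackedRows_subset_filter_of_mem_stripInterpolants (hζl : ζ.length = r)
    (hη : η ∈ stripInterpolants r ζ ν) :
    stackedRows r ζ ν ⊆ (ribbonRows r ζ ν).filter fun i => η.getD i 0 < ζ.getD i 0 := by
  obtain ⟨hηl, hηs, ⟨⟨-, hηζ⟩, -⟩, ⟨-, hcol⟩⟩ := hη
  intro i hi
  obtain ⟨hiR, hi1, hlt⟩ := mem_stackedRows.mp hi
  obtain ⟨-, hνζ⟩ := mem_ribbonRows.mp hiR
  refine mem_filter.mpr ⟨hiR, ?_⟩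
  have hηi := List.pairwise_le_iff_getD_le_getD_succ.mp hηs i (by omega)
  have := hηζ i (by omega)
  by_contra! h
  exact hcol i (ζ.getD i 0) ⟨by omega, hνζ, by omega⟩ ⟨by omega, hlt, by omega⟩

theorem stripInterpolants_eq_image (hζl : ζ.length = r) (hζ : ζ.Pairwise (· ≤ ·))
    (hν : ν.Pairwise (· ≤ ·)) (hrib : IsRibbon ζ ν) :
    stripInterpolants r ζ ν = ((ribbonRows r ζ ν \ stackedRows r ζ ν).powerset.image
      fun T => lowerRows r ζ (stackedRows r ζ ν ∪ T) : Set (List ℕ)) := by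
  ext η
  simp only [coe_image, Set.mem_image, mem_coe, mem_powerset]
  constructor
  · intro hη
    refine ⟨(ribbonRows r ζ ν).filter (fun i => η.getD i 0 < ζ.getD i 0) \ stackedRows r ζ ν,
       sdiff_subset_sdiff (filter_subset _ _) subset_rfl, ?_⟩
    rw [union_sdiff_of_subset (stackedRows_subset_filter_of_mem_stripInterpolants hζl hη)]
    exact (eq_lowerRows_of_mem_stripInterpolants hζl hη).symm
  · rintro ⟨T, hT, rfl⟩
    exact lowerRows_mem_stripInterpolants hζl hζ hν hrib subset_union_left
      (stackedRows_union_subset_ribbonRows hT)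

theorem psiV_lowerRows (hζl : ζ.length = r) {S : Finset ℕ} (hS : S ⊆ ribbonRows r ζ ν) :
    psiV ζ (lowerRows r ζ S) = ∏ i ∈ S, yP (i + ζ.getD i 0) := by
  have hrow : ∀ i ∈ range r, ∏ j ∈ Ioc ((lowerRows r ζ S).getD i 0) (ζ.getD i 0), yP (i + j)
      = if i ∈ S then yP (i + ζ.getD i 0) else 1 := by
    intro i hi
    rw [lowerRows_getD ζ S (mem_range.mp hi)]
    split_ifs with hiS
    · have hpos : 1 ≤ ζ.getD i 0 := Nat.one_le_of_lt (mem_ribbonRows.mp (hS hiS)).2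
      rw [← Nat.sub_add_cancel hpos, Nat.add_sub_cancel, Nat.Ioc_succ_singleton, prod_singleton]
    · rw [Ioc_self, prod_empty]
  rw [psiV, hζl, prod_congr rfl hrow, prod_ite_mem,
    inter_eq_right.mpr (hS.trans ribbonRows_subset_range)]

theorem psiH_lowerRows (hζl : ζ.length = r) (hsk : IsSkew ζ ν) {S : Finset ℕ}
    (hS : S ⊆ ribbonRows r ζ ν) (x : Rpoly) :
    psiH (lowerRows r ζ S) ν x =
      nonterminalWeight r ζ ν x * ∏ i ∈ ribbonRows r ζ ν \ S, (x - yP (i + ζ.getD i 0)) := by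
  have hrow : ∀ i ∈ range r,
      ∏ j ∈ Ioc (ν.getD i 0) ((lowerRows r ζ S).getD i 0), (x - yP (i + j)) =
        (∏ j ∈ Ioo (ν.getD i 0) (ζ.getD i 0), (x - yP (i + j))) *
          if i ∈ ribbonRows r ζ ν \ S then x - yP (i + ζ.getD i 0) else 1 := by
    intro i hi
    have hi := mem_range.mp hi
    have := hsk.2 i (by omega)
    rw [lowerRows_getD ζ S hi]
    by_cases hiS : i ∈ S
    · have := (mem_ribbonRows.mp (hS hiS)).2
      rw [if_pos hiS, if_neg fun h => (mem_sdiff.mp h).2 hiS, mul_one]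
      exact prod_congr (ext fun j => by simp only [mem_Ioc, mem_Ioo]; omega) fun _ _ => rfl
    rw [if_neg hiS]
    by_cases hR : ν.getD i 0 < ζ.getD i 0
    · rw [if_pos (mem_sdiff.mpr ⟨mem_ribbonRows.mpr ⟨hi, hR⟩, hiS⟩)]
      exact prod_Ioc_eq_prod_Ioo_mul _ hR
    · rw [if_neg fun h => hR (mem_ribbonRows.mp (mem_sdiff.mp h).1).2,
        show ν.getD i 0 = ζ.getD i 0 by omega, Ioc_self, Ioo_self, prod_empty, mul_one]
  rw [psiH, lowerRows_length, prod_congr rfl hrow, prod_mul_distrib, prod_ite_mem,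
    inter_eq_right.mpr (sdiff_subset.trans ribbonRows_subset_range), nonterminalWeight]

theorem thetaW_eq (hζl : ζ.length = r) (hζ : ζ.Pairwise (· ≤ ·)) (hsk : IsSkew ζ ν)
    (x : Rpoly) :
    thetaW ζ ν x = nonterminalWeight r ζ ν x * ((∏ i ∈ stackedRows r ζ ν, yP (i + ζ.getD i 0)) *
      x ^ (ribbonRows r ζ ν \ stackedRows r ζ ν).card) := by
  have hrow : ∀ i ∈ range r,
      (∏ j ∈ Ioc (ν.getD i 0) (ζ.getD i 0),
        if j < ζ.getD i 0 then x - yP (i + j)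
        else if i + 1 < r ∧ ν.getD (i + 1) 0 < j ∧ j ≤ ζ.getD (i + 1) 0 then yP (i + j)
        else x) =
      (∏ j ∈ Ioo (ν.getD i 0) (ζ.getD i 0), (x - yP (i + j))) *
        ((if i ∈ stackedRows r ζ ν then yP (i + ζ.getD i 0) else 1) *
          if i ∈ ribbonRows r ζ ν \ stackedRows r ζ ν then x else 1) := by
    intro i hi
    have hi := mem_range.mp hi
    by_cases hR : i ∈ ribbonRows r ζ ν
    · have hcond : (i + 1 < r ∧ ν.getD (i + 1) 0 < ζ.getD i 0 ∧
          ζ.getD i 0 ≤ ζ.getD (i + 1) 0) ↔ i ∈ stackedRows r ζ ν := by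
        rw [mem_stackedRows]
        exact ⟨fun h => ⟨hR, h.1, h.2.1⟩, fun h => ⟨h.2.1, h.2.2,
          List.pairwise_le_iff_getD_le_getD_succ.mp hζ i (by omega)⟩⟩
      rw [prod_Ioc_eq_prod_Ioo_mul _ (mem_ribbonRows.mp hR).2, if_neg (lt_irrefl _),
        prod_congr rfl fun j hj => if_pos (mem_Ioo.mp hj).2, if_congr hcond rfl rfl]
      by_cases hB : i ∈ stackedRows r ζ ν <;> simp [hB, hR]
    · have := hsk.2 i (by omega)
      have hνζ := mem_ribbonRows.not.mp hR
      rw [if_neg fun h => hR (stackedRows_subset_ribbonRows h),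
        if_neg fun h => hR (mem_sdiff.mp h).1, show ν.getD i 0 = ζ.getD i 0 by omega, Ioc_self,
        Ioo_self, prod_empty, prod_empty, mul_one, mul_one]
  rw [thetaW, hζl, prod_congr rfl hrow, prod_mul_distrib, prod_mul_distrib, prod_ite_mem,
    prod_ite_mem, inter_eq_right.mpr (stackedRows_subset_ribbonRows.trans ribbonRows_subset_range),
    inter_eq_right.mpr (sdiff_subset.trans ribbonRows_subset_range), prod_const, nonterminalWeight]

theorem finsum_stripInterpolants_psiV_mul_psiH (hζl : ζ.length = r) (hζ : ζ.Pairwise (· ≤ ·))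
    (hν : ν.Pairwise (· ≤ ·)) (hrib : IsRibbon ζ ν) (x : Rpoly) :
    ∑ᶠ η ∈ stripInterpolants r ζ ν, psiV ζ η * psiH η ν x = thetaW ζ ν x := by
  have hterm : ∀ T ∈ (ribbonRows r ζ ν \ stackedRows r ζ ν).powerset,
      psiV ζ (lowerRows r ζ (stackedRows r ζ ν ∪ T)) *
          psiH (lowerRows r ζ (stackedRows r ζ ν ∪ T)) ν x =
        nonterminalWeight r ζ ν x * ((∏ i ∈ stackedRows r ζ ν ∪ T, yP (i + ζ.getD i 0)) *
          ∏ i ∈ (ribbonRows r ζ ν \ stackedRows r ζ ν) \ T, (x - yP (i + ζ.getD i 0))) := by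
    intro T hT
    have hS := stackedRows_union_subset_ribbonRows (mem_powerset.mp hT)
    rw [psiV_lowerRows hζl hS, psiH_lowerRows hζl hrib.1 hS, sdiff_union_distrib,
      ← Finset.sdiff_sdiff_left']
    ring
  rw [stripInterpolants_eq_image hζl hζ hν hrib, finsum_mem_coe_finset,
    sum_image lowerRows_injOn_union_stackedRows, sum_congr rfl hterm, ← mul_sum,
    sum_powerset_prod_union_mul_prod_sdiff disjoint_sdiff, thetaW_eq hζl hζ hrib.1]

end RibbonRows

theorem ribbon_weight_decomposition_general (r : ℕ) (ζ μ : List ℕ)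
    (hζl : ζ.length = r) (hζs : ζ.Pairwise (· ≤ ·))
    (hμs : μ.Pairwise (· ≤ ·))
    (hrib : IsRibbon ζ (0 :: μ)) :
    (∑ᶠ η ∈ {η : List ℕ | η.length = r ∧ η.Pairwise (· ≤ ·) ∧
          IsVStrip ζ η ∧ IsHStrip η (0 :: μ)},
        psiV ζ η * psiH η (0 :: μ) (xP r))
      = thetaW ζ (0 :: μ) (xP r) :=
  finsum_stripInterpolants_psiV_mul_psiH hζl hζs
    (List.pairwise_cons.mpr ⟨fun _ _ => Nat.zero_le _, hμs⟩) hrib (xP r)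

/-- for a ribbon `ζ/μ` (with `ζ ∈ ℕ^r`, `μ ∈ ℕ^{r-1}` weakly
increasing, `μ` padded with an initial `0` part),
`Σ_η ψ^v(ζ/η) · ψ^h(η/μ) = θ(ζ/μ)`, the sum over all `η` such that `ζ/η` is a
vertical strip and `η/μ` is a horizontal strip, `x` standing for `x_r`. -/
theorem ribbon_weight_decomposition (r : ℕ) (hr : 0 < r) (ζ μ : List ℕ)
    (hζl : ζ.length = r) (hζs : ζ.Pairwise (· ≤ ·))
    (hμl : μ.length + 1 = r) (hμs : μ.Pairwise (· ≤ ·))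
    (hrib : IsRibbon ζ (0 :: μ)) :
    (∑ᶠ η ∈ {η : List ℕ | η.length = r ∧ η.Pairwise (· ≤ ·) ∧
          IsVStrip ζ η ∧ IsHStrip η (0 :: μ)},
        psiV ζ η * psiH η (0 :: μ) (xP r))
      = thetaW ζ (0 :: μ) (xP r) :=
  ribbon_weight_decomposition_general r ζ μ hζl hζs hμs hrib
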